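/- arXiv:2604.06525 — 5 statements merged into one kernel-verified Lean document; each statement's English description precedes it below -/
import Mathlib

section
/- Fix scalars η_{k-1}, η_k > 0, γ_{k-1}, γ_k ≥ 0, β_{k-1} ∈ [0,1), β_k ∈ (0,1), points y₀, y_{k-2} ∈ H, z_{k-1}, z_k ∈ X, and vectors G_{k-1}, G_k ∈ H. Define y_{k-1} := (1-β_{k-1})·y_{k-2} + β_{k-1}·z_{k-1} and y_k := (1-β_k)·y_{k-1} + β_k·z_k. Assume the optimality conditions: (i) for all z ∈ X, ⟨G_k + η_k⁻¹(z_k - y_{k-1}) + η_k⁻¹γ_k(z_k - y₀), z - z_k⟩ ≥ h(z_k) - h(z); (ii) for all z ∈ X, ⟨G_{k-1} + η_{k-1}⁻¹(z_{k-1} - y_{k-2}) + η_{k-1}⁻¹γ_{k-1}(z_{k-1} - y₀), z - z_{k-1}⟩ ≥ h(z_{k-1}) - h(z); and the stepsize condition η_k ≤ 2(1-β_{k-1})(1-β_k)·η_{k-1}. Then for every z ∈ X: η_k⟨G_k, z_{k-1} - z⟩ + η_k(h(z_{k-1}) - h(z)) + ((1+γ_k(1-β_k))/2)·‖z_k - y_{k-1}‖²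 ≤ ((1+γ_k(1-β_k))/(2β_k))·‖y_{k-1} - z‖² - ((1+γ_k)/(2β_k))·‖y_k - z‖² + η_k⟨G_k - G_{k-1}, z_{k-1} - z_k⟩ + (γ_k/2)·‖y₀ - z‖² - (γ_k/2 - η_k·γ_{k-1}/(4η_{k-1}))·‖z_k - y₀‖². -/
open scoped RealInnerProductSpace

/-!
Test the optimality condition of step k at z and that of step k-1 at z_k, each multiplied by
η_k. In the first, the prox terms are rewritten exactly by the three-point identity
2⟪x - y, z - x⟫ = ‖y - z‖² - ‖x - y‖² - ‖x - z‖². In the second, since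
z_{k-1} - y_{k-2} = (z_{k-1} - y_{k-1}) / (1 - β_{k-1}), they are bounded by
⟪a, b⟫ ≤ ‖a + b‖² / 4, and the stepsize condition is exactly what makes the resulting
coefficient of ‖z_k - y_{k-1}‖² at most (1 - β_k) / 2. Adding the two, the gradient terms
combine into η_k ⟪G_k - G_{k-1}, z_{k-1} - z_k⟫, and expanding
‖y_k - z‖² = ‖(1 - β_k)(y_{k-1} - z) + β_k (z_k - z)‖² shows that what remains is an identity.
-/

section
variable {H : Type*} [NormedAddCommGroup H] [InnerProductSpace ℝ H]

theorem real_inner_le_norm_add_sq_div_four (a b : H) : ⟪a, b⟫ ≤ ‖a + b‖ ^ 2 / 4 := by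
  rw [norm_add_sq_real]
  linarith [norm_sub_sq_real a b, sq_nonneg ‖a - b‖]

theorem real_inner_sub_sub_eq_norm_sq (x y z : H) :
    ⟪x - y, z - x⟫ = (‖y - z‖ ^ 2 - ‖x - y‖ ^ 2 - ‖x - z‖ ^ 2) / 2 := by
  have h := norm_add_sq_real (x - y) (z - x)
  rw [sub_add_sub_cancel', norm_sub_rev z y, norm_sub_rev z x] at h
  linarith

theorem norm_one_sub_smul_add_smul_sq (β : ℝ) (a b : H) :
    ‖(1 - β) • a + β • b‖ ^ 2
      = (1 - β) * ‖a‖ ^ 2 + β * ‖b‖ ^ 2 - β * (1 - β) * ‖a - b‖ ^ 2 := by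
  simp only [← real_inner_self_eq_norm_sq, inner_add_left, inner_add_right, inner_sub_left,
    inner_sub_right, real_inner_smul_left, real_inner_smul_right, real_inner_comm a b]
  ring

theorem mul_le_of_le_inner_prox_grad {η γ d : ℝ} {G u v w : H} (hη : 0 < η)
    (hopt : d ≤ ⟪G + η⁻¹ • u + (η⁻¹ * γ) • v, w⟫) :
    η * d ≤ η * ⟪G, w⟫ + ⟪u, w⟫ + γ * ⟪v, w⟫ := by
  rw [inner_add_left, inner_add_left, real_inner_smul_left, real_inner_smul_left] at hopt
  calc η * d ≤ η * (⟪G, w⟫ + η⁻¹ * ⟪u, w⟫ + η⁻¹ * γ * ⟪v, w⟫) :=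
        mul_le_mul_of_nonneg_left hopt hη.le
    _ = η * ⟪G, w⟫ + ⟪u, w⟫ + γ * ⟪v, w⟫ := by field_simp

theorem prox_step_le {η γ d : ℝ} {G y y₀ zp z : H} (hη : 0 < η)
    (hopt : d ≤ ⟪G + η⁻¹ • (zp - y) + (η⁻¹ * γ) • (zp - y₀), z - zp⟫) :
    η * d ≤ η * ⟪G, z - zp⟫ + (‖y - z‖ ^ 2 - ‖zp - y‖ ^ 2 - ‖zp - z‖ ^ 2) / 2
      + γ / 2 * (‖y₀ - z‖ ^ 2 - ‖zp - y₀‖ ^ 2 - ‖zp - z‖ ^ 2) := by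
  have h := mul_le_of_le_inner_prox_grad hη hopt
  rw [real_inner_sub_sub_eq_norm_sq, real_inner_sub_sub_eq_norm_sq] at h
  linarith

theorem prox_step_le_averaged {η β γ d : ℝ} {G y y' y₀ zp z : H} (hη : 0 < η)
    (hβ : β < 1) (hγ : 0 ≤ γ) (hy : y = (1 - β) • y' + β • zp)
    (hopt : d ≤ ⟪G + η⁻¹ • (zp - y') + (η⁻¹ * γ) • (zp - y₀), z - zp⟫) :
    η * d ≤ η * ⟪G, z - zp⟫ + ‖z - y‖ ^ 2 / (4 * (1 - β)) + γ / 4 * ‖z - y₀‖ ^ 2 := by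
  have hβ' : 0 < 1 - β := sub_pos.mpr hβ
  have hzy : zp - y' = (1 - β)⁻¹ • (zp - y) := by
    rw [hy, eq_inv_smul_iff₀ hβ'.ne']
    module
  have h := mul_le_of_le_inner_prox_grad hη hopt
  rw [hzy, real_inner_smul_left] at h
  have hy_le : (1 - β)⁻¹ * ⟪zp - y, z - zp⟫ ≤ ‖z - y‖ ^ 2 / (4 * (1 - β)) :=
    calc (1 - β)⁻¹ * ⟪zp - y, z - zp⟫ ≤ (1 - β)⁻¹ * (‖(zp - y) + (z - zp)‖ ^ 2 / 4) :=
          mul_le_mul_of_nonneg_left (real_inner_le_norm_add_sq_div_four _ _)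
            (inv_nonneg.mpr hβ'.le)
      _ = ‖z - y‖ ^ 2 / (4 * (1 - β)) := by rw [sub_add_sub_cancel']; field_simp
  have hy₀_le : γ * ⟪zp - y₀, z - zp⟫ ≤ γ / 4 * ‖z - y₀‖ ^ 2 := by
    have := mul_le_mul_of_nonneg_left (real_inner_le_norm_add_sq_div_four (zp - y₀) (z - zp)) hγ
    rw [sub_add_sub_cancel'] at this
    linarith
  linarith

theorem prox_step_le_averaged_of_stepsize {η η' β β' γ d : ℝ} {G y y' y₀ zp z : H}
    (hη : 0 ≤ η) (hη' : 0 < η') (hβ' : β' < 1) (hγ : 0 ≤ γ)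
    (hstep : η ≤ 2 * (1 - β') * (1 - β) * η') (hy : y = (1 - β') • y' + β' • zp)
    (hopt : d ≤ ⟪G + η'⁻¹ • (zp - y') + (η'⁻¹ * γ) • (zp - y₀), z - zp⟫) :
    η * d ≤ η * ⟪G, z - zp⟫ + (1 - β) / 2 * ‖z - y‖ ^ 2 + η * γ / (4 * η') * ‖z - y₀‖ ^ 2 := by
  have h1β' : 0 < 1 - β' := sub_pos.mpr hβ'
  have hcoef : η / (4 * η' * (1 - β')) ≤ (1 - β) / 2 := by
    rw [div_le_iff₀ (by positivity)]
    linarith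
  calc η * d = η / η' * (η' * d) := by field_simp
    _ ≤ η / η' * (η' * ⟪G, z - zp⟫ + ‖z - y‖ ^ 2 / (4 * (1 - β')) + γ / 4 * ‖z - y₀‖ ^ 2) :=
        mul_le_mul_of_nonneg_left (prox_step_le_averaged hη' hβ' hγ hy hopt)
          (div_nonneg hη hη'.le)
    _ = η * ⟪G, z - zp⟫ + η / (4 * η' * (1 - β')) * ‖z - y‖ ^ 2
          + η * γ / (4 * η') * ‖z - y₀‖ ^ 2 := by
        field_simp
    _ ≤ η * ⟪G, z - zp⟫ + (1 - β) / 2 * ‖z - y‖ ^ 2 + η * γ / (4 * η') * ‖z - y₀‖ ^ 2 := by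
        gcongr

end

theorem stmt0_general {H : Type*} [NormedAddCommGroup H] [InnerProductSpace ℝ H]
    (X : Set H) (h : H → ℝ)
    (ηkm ηk γkm γk βkm βk : ℝ)
    (y₀ ykm2 : H) (zkm zk : H) (Gkm Gk : H)
    (hηkm : 0 < ηkm) (hηk : 0 < ηk)
    (hγkm : 0 ≤ γkm)
    (hβkm : βkm ∈ Set.Ico (0:ℝ) 1) (hβk : βk ∈ Set.Ioo (0:ℝ) 1)
    (hzk : zk ∈ X)
    (ykm : H) (hykm : ykm = (1 - βkm) • ykm2 + βkm • zkm)
    (yk : H) (hyk : yk = (1 - βk) • ykm + βk • zk)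
    (hopt_k : ∀ z ∈ X,
      ⟪Gk + ηk⁻¹ • (zk - ykm) + (ηk⁻¹ * γk) • (zk - y₀), z - zk⟫ ≥ h zk - h z)
    (hopt_km : ∀ z ∈ X,
      ⟪Gkm + ηkm⁻¹ • (zkm - ykm2) + (ηkm⁻¹ * γkm) • (zkm - y₀), z - zkm⟫ ≥ h zkm - h z)
    (hstep : ηk ≤ 2 * (1 - βkm) * (1 - βk) * ηkm) :
    ∀ z ∈ X,
      ηk * ⟪Gk, zkm - z⟫ + ηk * (h zkm - h z)
          + ((1 + γk * (1 - βk)) / 2) * ‖zk - ykm‖ ^ 2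
        ≤ ((1 + γk * (1 - βk)) / (2 * βk)) * ‖ykm - z‖ ^ 2
          - ((1 + γk) / (2 * βk)) * ‖yk - z‖ ^ 2
          + ηk * ⟪Gk - Gkm, zkm - zk⟫
          + (γk / 2) * ‖y₀ - z‖ ^ 2
          - (γk / 2 - ηk * γkm / (4 * ηkm)) * ‖zk - y₀‖ ^ 2 := by
  intro z hz
  have hk := prox_step_le hηk (hopt_k z hz)
  have hkm := prox_step_le_averaged_of_stepsize hηk.le hηkm hβkm.2 hγkm hstep hykm
    (hopt_km zk hzk)
  have hyk_sq : ‖yk - z‖ ^ 2 = (1 - βk) * ‖ykm - z‖ ^ 2 + βk * ‖zk - z‖ ^ 2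
      - βk * (1 - βk) * ‖zk - ykm‖ ^ 2 := by
    rw [show yk - z = (1 - βk) • (ykm - z) + βk • (zk - z) by rw [hyk]; module,
      norm_one_sub_smul_add_smul_sq, sub_sub_sub_cancel_right, norm_sub_rev ykm zk]
  have hpotential : (1 + γk * (1 - βk)) / (2 * βk) * ‖ykm - z‖ ^ 2
      - (1 + γk) / (2 * βk) * ‖yk - z‖ ^ 2
      = ‖ykm - z‖ ^ 2 / 2 - (1 + γk) / 2 * ‖zk - z‖ ^ 2
        + (1 + γk) * (1 - βk) / 2 * ‖zk - ykm‖ ^ 2 := by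
    rw [hyk_sq]
    field_simp [hβk.1.ne']
    ring
  have hgrad : ηk * ⟪Gk, zkm - z⟫ + ηk * ⟪Gk, z - zk⟫ + ηk * ⟪Gkm, zk - zkm⟫
      = ηk * ⟪Gk - Gkm, zkm - zk⟫ := by
    simp only [inner_sub_left, inner_sub_right]
    ring
  linarith

/-- Lemma 4.4 (one-step optimality inequality for stochastic AC-FGM). -/
theorem stmt0 {H : Type*} [NormedAddCommGroup H] [InnerProductSpace ℝ H]
    (X : Set H) (h : H → ℝ)
    (ηkm ηk γkm γk βkm βk : ℝ)
    (y₀ ykm2 : H) (zkm zk : H) (Gkm Gk : H)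
    (hηkm : 0 < ηkm) (hηk : 0 < ηk)
    (hγkm : 0 ≤ γkm) (hγk : 0 ≤ γk)
    (hβkm : βkm ∈ Set.Ico (0:ℝ) 1) (hβk : βk ∈ Set.Ioo (0:ℝ) 1)
    (hzkm : zkm ∈ X) (hzk : zk ∈ X)
    (ykm : H) (hykm : ykm = (1 - βkm) • ykm2 + βkm • zkm)
    (yk : H) (hyk : yk = (1 - βk) • ykm + βk • zk)
    (hopt_k : ∀ z ∈ X,
      ⟪Gk + ηk⁻¹ • (zk - ykm) + (ηk⁻¹ * γk) • (zk - y₀), z - zk⟫ ≥ h zk - h z)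
    (hopt_km : ∀ z ∈ X,
      ⟪Gkm + ηkm⁻¹ • (zkm - ykm2) + (ηkm⁻¹ * γkm) • (zkm - y₀), z - zkm⟫ ≥ h zkm - h z)
    (hstep : ηk ≤ 2 * (1 - βkm) * (1 - βk) * ηkm) :
    ∀ z ∈ X,
      ηk * ⟪Gk, zkm - z⟫ + ηk * (h zkm - h z)
          + ((1 + γk * (1 - βk)) / 2) * ‖zk - ykm‖ ^ 2
        ≤ ((1 + γk * (1 - βk)) / (2 * βk)) * ‖ykm - z‖ ^ 2
          - ((1 + γk) / (2 * βk)) * ‖yk - z‖ ^ 2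
          + ηk * ⟪Gk - Gkm, zkm - zk⟫
          + (γk / 2) * ‖y₀ - z‖ ^ 2
          - (γk / 2 - ηk * γkm / (4 * ηkm)) * ‖zk - y₀‖ ^ 2 :=
  stmt0_general X h ηkm ηk γkm γk βkm βk y₀ ykm2 zkm zk Gkm Gk hηkm hηk hγkm hβkm hβk hzk ykm hykm
    yk hyk hopt_k hopt_km hstep
end

section
/- Let η₁ > 0, γ₁ ≥ 0, x₀ ∈ X, G₁ ∈ H, and let z₁ ∈ X satisfy the optimality condition: for all z ∈ X, ⟨G₁ + ((1+γ₁)/η₁)·(z₁ - x₀), z - z₁⟩ ≥ h(z₁) - h(z). Let s₀ ∈ H satisfy the subgradient inequality h(z) ≥ h(x₀) + ⟨s₀, z - x₀⟩ for all z ∈ X. Then for every x* ∈ X: (1/2)·‖z₁ - x₀‖² + ‖z₁ - x*‖² ≤ (2η₁/(1+γ₁))·[ (η₁/(1+γ₁))·‖G₁ + s₀‖² + ⟨G₁, x* - x₀⟩ + h(x*) - h(x₀) ] + ‖x₀ - x*‖². -/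
/-!
Test the optimality condition of the proximal step at `x*` and expand the cross term
`⟪z₁ - x₀, x* - z₁⟫` by the three-point identity; this trades the linear term for the squared
distances. What remains is `⟪G₁, x₀ - z₁⟫ + h x₀ - h z₁`, which the subgradient inequality at `z₁`
bounds by `⟪G₁ + s₀, x₀ - z₁⟫`, and Young's inequality absorbs that into `‖G₁ + s₀‖²` and half of
`‖z₁ - x₀‖²`.
-/

open scoped RealInnerProductSpace

section

variable {H : Type*} [NormedAddCommGroup H] [InnerProductSpace ℝ H]

theorem two_mul_inner_sub_sub_eq (x y z : H) :
    2 * ⟪z - x, y - z⟫ = ‖x - y‖ ^ 2 - ‖z - x‖ ^ 2 - ‖z - y‖ ^ 2 := by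
  have hxy : x - y = -(z - x) - (y - z) := by abel
  have hzy : z - y = -(y - z) := by abel
  rw [hxy, hzy, norm_sub_sq_real, norm_neg, norm_neg, inner_neg_left]
  ring

theorem two_mul_mul_inner_le (t : ℝ) (v w : H) :
    2 * t * ⟪v, w⟫ ≤ 2 * t ^ 2 * ‖v‖ ^ 2 + ‖w‖ ^ 2 / 2 := by
  have h := sq_nonneg ‖(2 * t) • v - w‖
  rw [norm_sub_sq_real, norm_smul, real_inner_smul_left, mul_pow, Real.norm_eq_abs, sq_abs] at h
  linarith

theorem prox_step_three_point {h : H → ℝ} {t : ℝ} (ht : 0 < t) {g x y z : H}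
    (hopt : ⟪g + t⁻¹ • (z - x), y - z⟫ ≥ h z - h y) :
    ‖z - x‖ ^ 2 + ‖z - y‖ ^ 2 ≤ ‖x - y‖ ^ 2 + 2 * t * (⟪g, y - z⟫ + h y - h z) := by
  rw [inner_add_left, real_inner_smul_left] at hopt
  have hscaled := mul_le_mul_of_nonneg_left hopt (by positivity : (0 : ℝ) ≤ 2 * t)
  have hcancel : 2 * t * (t⁻¹ * ⟪z - x, y - z⟫) = 2 * ⟪z - x, y - z⟫ := by
    field_simp
  linarith [two_mul_inner_sub_sub_eq x y z]

end

theorem stmt2_general {H : Type*} [NormedAddCommGroup H] [InnerProductSpace ℝ H]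
    (X : Set H) (h : H → ℝ)
    (η₁ γ₁ : ℝ) (hη₁ : 0 < η₁) (hγ₁ : 0 ≤ γ₁)
    (x₀ : H) (G₁ : H) (z₁ : H) (hz₁ : z₁ ∈ X)
    (hopt : ∀ z ∈ X, ⟪G₁ + ((1 + γ₁) / η₁) • (z₁ - x₀), z - z₁⟫ ≥ h z₁ - h z)
    (s₀ : H) (hs₀ : ∀ z ∈ X, h z ≥ h x₀ + ⟪s₀, z - x₀⟫) :
    ∀ xstar ∈ X,
      (1 / 2) * ‖z₁ - x₀‖ ^ 2 + ‖z₁ - xstar‖ ^ 2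
        ≤ (2 * η₁ / (1 + γ₁)) *
            ((η₁ / (1 + γ₁)) * ‖G₁ + s₀‖ ^ 2 + ⟪G₁, xstar - x₀⟫ + h xstar - h x₀)
          + ‖x₀ - xstar‖ ^ 2 := by
  intro xstar hxstar
  set t := η₁ / (1 + γ₁)
  have ht : 0 < t := div_pos hη₁ (by linarith)
  have hprox := prox_step_three_point ht (by rw [inv_div]; exact hopt xstar hxstar)
  have hsub := mul_le_mul_of_nonneg_left (hs₀ z₁ hz₁) (by positivity : (0 : ℝ) ≤ 2 * t)
  have hyoung := two_mul_mul_inner_le t (G₁ + s₀) (x₀ - z₁)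
  have hsplit : ⟪G₁, xstar - z₁⟫ = ⟪G₁, xstar - x₀⟫ + ⟪G₁, x₀ - z₁⟫ := by
    rw [← inner_add_right, sub_add_sub_cancel]
  have hlin : ⟪G₁ + s₀, x₀ - z₁⟫ = ⟪G₁, x₀ - z₁⟫ - ⟪s₀, z₁ - x₀⟫ := by
    simp only [inner_add_left, inner_sub_right]
    ring
  rw [show 2 * η₁ / (1 + γ₁) = 2 * t by ring]
  rw [norm_sub_rev x₀ z₁] at hyoung
  linear_combination hprox + hsub + hyoung + 2 * t * hsplit - 2 * t * hlin

/-- Bound on the initial optimality gap (proof of Proposition 4.5). -/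
theorem stmt2 {H : Type*} [NormedAddCommGroup H] [InnerProductSpace ℝ H]
    (X : Set H) (h : H → ℝ)
    (η₁ γ₁ : ℝ) (hη₁ : 0 < η₁) (hγ₁ : 0 ≤ γ₁)
    (x₀ : H) (hx₀ : x₀ ∈ X) (G₁ : H) (z₁ : H) (hz₁ : z₁ ∈ X)
    (hopt : ∀ z ∈ X, ⟪G₁ + ((1 + γ₁) / η₁) • (z₁ - x₀), z - z₁⟫ ≥ h z₁ - h z)
    (s₀ : H) (hs₀ : ∀ z ∈ X, h z ≥ h x₀ + ⟪s₀, z - x₀⟫) :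
    ∀ xstar ∈ X,
      (1 / 2) * ‖z₁ - x₀‖ ^ 2 + ‖z₁ - xstar‖ ^ 2
        ≤ (2 * η₁ / (1 + γ₁)) *
            ((η₁ / (1 + γ₁)) * ‖G₁ + s₀‖ ^ 2 + ⟪G₁, xstar - x₀⟫ + h xstar - h x₀)
          + ‖x₀ - xstar‖ ^ 2 :=
  stmt2_general X h η₁ γ₁ hη₁ hγ₁ x₀ G₁ z₁ hz₁ hopt s₀ hs₀
end

section
/- Let β ∈ (0,1), η₁ > 0, and let (L̄_k)_{k≥1} be a sequence of positive reals. Define the stepsizes recursively by η₂ := min(1/(16·L̄₁), 2(1-β)·η₁) and, for every k ≥ 2, η_{k+1} := min(k/(16·L̄_k), (k+1)·η_k/k). For N ≥ 2 define L̂_{N-1} := max(1/(32(1-β)·η₁), L̄₁, L̄₂, …, L̄_{N-1}). Then for every N ≥ 2, η_N ≥ N/(32·L̂_{N-1}). -/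
/-! The stepsize `η_N` stays above `N / (32 M_N)`, where `M_N` is the running maximum of the
initial bound `1 / (32 (1 - β) η₁)` and `L̄₁, …, L̄_{N-1}`. Both branches of each `min` preserve this:
the curvature branch because `L̄_k ≤ M_{k+1}` and `k + 1 ≤ 2k`, the growth branch because it scales
the inductive bound by `(k + 1) / k` while `M_k ≤ M_{k+1}`. -/

lemma succ_div_le_div {k L M : ℝ} (hk : 1 ≤ k) (hL : 0 < L) (hLM : L ≤ M) :
    (k + 1) / (32 * M) ≤ k / (16 * L) := by
  rw [div_le_div_iff₀ (by linarith) (by positivity)]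
  nlinarith

lemma stepsize_base {c L M : ℝ} (hc : 0 < c) (hL : 0 < L) (hLM : L ≤ M)
    (hcM : 1 / (32 * c) ≤ M) :
    2 / (32 * M) ≤ min (1 / (16 * L)) (2 * c) := by
  refine le_min (by simpa [one_add_one_eq_two] using succ_div_le_div le_rfl hL hLM) ?_
  have hM : 0 < M := hL.trans_le hLM
  rw [div_le_iff₀ (by positivity)] at hcM ⊢
  linarith

lemma stepsize_step {k e L M M' : ℝ} (hk : 1 ≤ k) (hL : 0 < L) (hLM : L ≤ M)
    (hM' : 0 < M') (hM'M : M' ≤ M) (he : k / (32 * M') ≤ e) :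
    (k + 1) / (32 * M) ≤ min (k / (16 * L)) ((k + 1) * e / k) := by
  refine le_min (succ_div_le_div hk hL hLM) ?_
  calc (k + 1) / (32 * M) ≤ (k + 1) / (32 * M') := by gcongr
    _ = (k + 1) * (k / (32 * M')) / k := by field_simp
    _ ≤ (k + 1) * e / k := by gcongr

/-- Lemma 4.6: lower bound on the adaptive stepsizes of stochastic AC-FGM. -/
theorem stmt3 (β η₁ : ℝ) (hβ : β ∈ Set.Ioo (0:ℝ) 1) (hη₁ : 0 < η₁)
    (Lbar : ℕ → ℝ) (hLbar : ∀ k, 1 ≤ k → 0 < Lbar k)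
    (η : ℕ → ℝ)
    (hη₂ : η 2 = min (1 / (16 * Lbar 1)) (2 * (1 - β) * η₁))
    (hrec : ∀ k, 2 ≤ k →
      η (k + 1) = min ((k : ℝ) / (16 * Lbar k)) (((k : ℝ) + 1) * η k / (k : ℝ))) :
    ∀ N : ℕ, ∀ _hN : 2 ≤ N,
      η N ≥ (N : ℝ) /
        (32 * max (1 / (32 * (1 - β) * η₁))
          ((Finset.Icc 1 (N - 1)).sup' (Finset.nonempty_Icc.mpr (by omega)) Lbar)) := by
  have hc : 0 < (1 - β) * η₁ := mul_pos (sub_pos.mpr hβ.2) hη₁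
  have hA : 0 < 1 / (32 * (1 - β) * η₁) := by rw [mul_assoc]; positivity
  intro N hN
  induction N, hN using Nat.le_induction with
  | base =>
    rw [hη₂]
    simpa only [mul_assoc, Nat.cast_ofNat] using stepsize_base hc (hLbar 1 le_rfl)
      (le_max_of_le_right (Finset.le_sup' Lbar (by simp))) (by simp [mul_assoc])
  | succ k hk ih =>
    rw [hrec k hk, Nat.cast_succ]
    exact stepsize_step (by exact_mod_cast hk.trans' one_le_two) (hLbar k (by omega))
      (le_max_of_le_right (Finset.le_sup' Lbar (by simp; omega))) (lt_max_of_lt_left hA)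
      (max_le_max le_rfl (Finset.sup'_mono _ (Finset.Icc_subset_Icc_right (by omega)) _)) ih
end

section
/- For every real β with 0 < β ≤ 1 and every integer k ≥ 1, the product ∏_{s=3}^{k+1} (s-β)/s satisfies ∏_{s=3}^{k+1} (s-β)/s ≥ (2/(k+1))^β. (For k = 1 the product is empty and equals 1.) -/
/-!
Each factor dominates a power of a telescoping factor: by Bernoulli's inequality for exponents
in `[0, 1]`, `((s - 1) / s) ^ β ≤ 1 - β / s = (s - β) / s`. Taking the product over `3 ≤ s ≤ k + 1`,
the right-hand side telescopes to `(2 / (k + 1)) ^ β`.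
-/

open Finset

lemma rpow_sub_one_div_le_sub_div {s β : ℝ} (hs : 1 ≤ s) (hβ0 : 0 ≤ β) (hβ1 : β ≤ 1) :
    ((s - 1) / s) ^ β ≤ (s - β) / s := by
  have hs0 : 0 < s := by linarith
  have hinv : -1 ≤ -(1 / s) := neg_le_neg ((div_le_one hs0).2 hs)
  calc ((s - 1) / s) ^ β = (1 + -(1 / s)) ^ β := by congr 1; field_simp; ring
    _ ≤ 1 + β * -(1 / s) := rpow_one_add_le_one_add_mul_self hinv hβ0 hβ1
    _ = (s - β) / s := by field_simp; ring

lemma prod_Icc_sub_one_div {m n : ℕ} (hm : 0 < m) (hmn : m ≤ n) :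
    ∏ s ∈ Icc (m + 1) n, ((s : ℝ) - 1) / s = m / n := by
  induction n, hmn using Nat.le_induction with
  | base =>
    have hm' : (m : ℝ) ≠ 0 := Nat.cast_ne_zero.2 hm.ne'
    simp [hm']
  | succ n hmn ih =>
    rw [prod_Icc_succ_top (by omega), ih]
    have hn : (n : ℝ) ≠ 0 := Nat.cast_ne_zero.2 (by omega)
    push_cast
    field_simp
    ring

/-- Equation (4.30): lower bound on the convergence-rate factor
`Γ_k = ∏_{s=3}^{k+1} (s-β)/s ≥ (2/(k+1))^β`. -/
theorem stmt4 (β : ℝ) (hβ0 : 0 < β) (hβ1 : β ≤ 1) (k : ℕ) (hk : 1 ≤ k) :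
    (∏ s ∈ Finset.Icc 3 (k + 1), (((s : ℝ) - β) / (s : ℝ)))
      ≥ (2 / ((k : ℝ) + 1)) ^ β := by
  have hthree_le : ∀ s ∈ Icc 3 (k + 1), (3 : ℝ) ≤ s := fun s hs => by
    exact_mod_cast (mem_Icc.1 hs).1
  have hfactor_nonneg : ∀ s ∈ Icc 3 (k + 1), 0 ≤ ((s : ℝ) - 1) / s := fun s hs =>
    div_nonneg (by linarith [hthree_le s hs]) (by linarith [hthree_le s hs])
  calc (2 / ((k : ℝ) + 1)) ^ β = (∏ s ∈ Icc 3 (k + 1), ((s : ℝ) - 1) / s) ^ β := by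
        rw [prod_Icc_sub_one_div (m := 2) (by norm_num) (by omega)]
        push_cast
        ring_nf
    _ = ∏ s ∈ Icc 3 (k + 1), (((s : ℝ) - 1) / s) ^ β :=
        (Real.finsetProd_rpow _ _ hfactor_nonneg β).symm
    _ ≤ ∏ s ∈ Icc 3 (k + 1), ((s : ℝ) - β) / s := by
        refine prod_le_prod (fun s hs => Real.rpow_nonneg (hfactor_nonneg s hs) β) fun s hs => ?_
        exact rpow_sub_one_div_le_sub_div (by linarith [hthree_le s hs]) hβ0.le hβ1
end

section
/- Let β ∈ (0,1) and for each integer k ≥ 1 define Γ_k := ∏_{s=3}^{k+1} (s-β)/s (with Γ_1 = 1, the empty product). Then for every integer N ≥ 1, ∑_{k=2}^{N+1} β/((k+1)·Γ_k) ≤ ((N+2)/2)^β. -/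
/-!
With `P_k := 1 / Γ_k = ∏_{s=3}^{k+1} s/(s-β)` the summand `β/((k+1)Γ_k)` is exactly
`P_k - P_{k-1}`, so the sum telescopes to `P_{N+1} - 1`. Bernoulli's inequality
`(1 - 1/s)^β ≤ 1 - β/s` gives `s/(s-β) ≤ (s/(s-1))^β` factorwise, and
`∏_{s=3}^{N+2} s/(s-1) = (N+2)/2` telescopes as well.
-/

open Finset

lemma div_sub_le_div_sub_one_rpow {s β : ℝ} (hs : 1 < s) (hβ0 : 0 ≤ β) (hβ1 : β ≤ 1) :
    s / (s - β) ≤ (s / (s - 1)) ^ β := by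
  have hs0 : 0 < s := by linarith
  have hbernoulli : ((s - 1) / s) ^ β ≤ (s - β) / s := by
    have h := rpow_one_add_le_one_add_mul_self (s := -(1 / s))
      (by rw [neg_le, neg_neg, div_le_one hs0]; linarith) hβ0 hβ1
    rwa [show 1 + -(1 / s) = (s - 1) / s by field_simp; ring,
      show 1 + β * -(1 / s) = (s - β) / s by field_simp; ring] at h
  calc s / (s - β) = ((s - β) / s)⁻¹ := (inv_div _ _).symm
    _ ≤ (((s - 1) / s) ^ β)⁻¹ := inv_anti₀ (by have := sub_pos.2 hs; positivity) hbernoulli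
    _ = (s / (s - 1)) ^ β := by rw [← Real.inv_rpow (div_nonneg (by linarith) hs0.le), inv_div]

lemma prod_Icc_three_div_pred {n : ℕ} (hn : 2 ≤ n) :
    ∏ s ∈ Icc 3 n, ((s : ℝ) / (s - 1)) = n / 2 := by
  induction n, hn using Nat.le_induction with
  | base => norm_num
  | succ n hn ih =>
    have hn' : (2 : ℝ) ≤ n := by exact_mod_cast hn
    rw [prod_Icc_succ_top (by omega), ih]
    push_cast
    rw [add_sub_cancel_right]
    field_simp

/-- The paper's `Γ_k`. -/
noncomputable def rateFactor (β : ℝ) (k : ℕ) : ℝ :=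
  ∏ s ∈ Icc 3 (k + 1), (((s : ℝ) - β) / s)

namespace rateFactor

variable {β : ℝ}

lemma inv_eq (β : ℝ) (k : ℕ) :
    (rateFactor β k)⁻¹ = ∏ s ∈ Icc 3 (k + 1), ((s : ℝ) / (s - β)) := by
  simp only [rateFactor, ← prod_inv_distrib, inv_div]

lemma one (β : ℝ) : rateFactor β 1 = 1 := by
  simp [rateFactor]

lemma succ (β : ℝ) {k : ℕ} (hk : 1 ≤ k) :
    rateFactor β (k + 1) = rateFactor β k * ((k + 2 - β) / (k + 2)) := by
  rw [rateFactor, prod_Icc_succ_top (by omega), ← rateFactor]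
  push_cast
  ring_nf

lemma pos (hβ : β < 3) (k : ℕ) : 0 < rateFactor β k := by
  refine prod_pos fun s hs => ?_
  have hs3 : (3 : ℝ) ≤ s := by exact_mod_cast (mem_Icc.1 hs).1
  exact div_pos (by linarith) (by linarith)

lemma div_succ_mul_eq_inv_sub_inv (hβ : β < 3) {k : ℕ} (hk : 1 ≤ k) :
    β / ((k + 2) * rateFactor β (k + 1)) = (rateFactor β (k + 1))⁻¹ - (rateFactor β k)⁻¹ := by
  have hpos := pos hβ k
  have hk' : (1 : ℝ) ≤ k := by exact_mod_cast hk
  have hsub : (0 : ℝ) < k + 2 - β := by linarith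
  rw [succ β hk]
  field_simp
  ring

lemma sum_Icc_two_div_eq (hβ : β < 3) (N : ℕ) :
    ∑ k ∈ Icc 2 (N + 1), β / ((k + 1 : ℝ) * rateFactor β k) = (rateFactor β (N + 1))⁻¹ - 1 := by
  induction N with
  | zero => simp [one]
  | succ N ih =>
    rw [sum_Icc_succ_top (by omega), ih,
      show ((N + 1 + 1 : ℕ) : ℝ) + 1 = ((N + 1 : ℕ) : ℝ) + 2 by push_cast; ring,
      div_succ_mul_eq_inv_sub_inv hβ (by omega)]
    ring

lemma inv_le_rpow (hβ0 : 0 ≤ β) (hβ1 : β ≤ 1) (N : ℕ) :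
    (rateFactor β (N + 1))⁻¹ ≤ ((N + 2 : ℝ) / 2) ^ β := by
  have hs : ∀ s ∈ Icc 3 (N + 2), (1 : ℝ) < s := fun s hs => by
    have : (3 : ℝ) ≤ s := by exact_mod_cast (mem_Icc.1 hs).1
    linarith
  calc (rateFactor β (N + 1))⁻¹ = ∏ s ∈ Icc 3 (N + 2), ((s : ℝ) / (s - β)) := inv_eq β (N + 1)
    _ ≤ ∏ s ∈ Icc 3 (N + 2), ((s : ℝ) / (s - 1)) ^ β := by
      refine prod_le_prod (fun s h => div_nonneg ?_ ?_) fun s h =>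
        div_sub_le_div_sub_one_rpow (hs s h) hβ0 hβ1 <;> linarith [hs s h]
    _ = (∏ s ∈ Icc 3 (N + 2), ((s : ℝ) / (s - 1))) ^ β :=
      Real.finsetProd_rpow _ _ (fun s h => div_nonneg (by linarith [hs s h]) (by linarith [hs s h])) β
    _ = ((N + 2 : ℝ) / 2) ^ β := by
      rw [prod_Icc_three_div_pred (by omega)]
      push_cast
      rfl

end rateFactor

/-- Equation (4.31): summation bound for the anchored regularization terms. -/
theorem stmt5 (β : ℝ) (hβ : β ∈ Set.Ioo (0:ℝ) 1)
    (Γ : ℕ → ℝ)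
    (hΓ : ∀ k, 1 ≤ k → Γ k = ∏ s ∈ Finset.Icc 3 (k + 1), (((s : ℝ) - β) / (s : ℝ))) :
    ∀ N : ℕ, 1 ≤ N →
      (∑ k ∈ Finset.Icc 2 (N + 1), β / (((k : ℝ) + 1) * Γ k))
        ≤ (((N : ℝ) + 2) / 2) ^ β := by
  obtain ⟨hβ0, hβ1⟩ := hβ
  intro N _
  have hΓ_eq : ∀ k ∈ Icc 2 (N + 1), Γ k = rateFactor β k := fun k hk =>
    hΓ k (by linarith [(mem_Icc.1 hk).1])
  rw [sum_congr rfl fun k hk => by rw [hΓ_eq k hk], rateFactor.sum_Icc_two_div_eq (by linarith)]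
  linarith [rateFactor.inv_le_rpow hβ0.le hβ1.le N]
end
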